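/- Let p be a prime number, let K = ℚ(√p) be the real quadratic field realized as the subfield of ℝ generated over ℚ by the positive real square root a = √p of p. Then the two diagonal quadratic forms in 8 variables over K, q₊(x) = x₁² + x₂² + x₃² + x₄² + a·(x₅² + x₆² + x₇² + x₈²) and q₋(x) = x₁² + x₂² + x₃² + x₄² − a·(x₅² + x₆² + x₇² + x₈²), are not equivalent (i.e., there is no K-linear isometry equivalence between them). -/

import Mathlib

open IntermediateField

/-!
Under the embedding `K ⊆ ℝ`, where `a = √p > 0`, the first form is a sum of squares with
nonnegative weights and so takes only nonnegative values, while the second takes the negative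
value `-a` at a basis vector of weight `-a`. Equivalent forms take the same values.
-/

namespace QuadraticMap

lemma weightedSumSquares_single {R ι : Type*} [CommSemiring R] [Fintype ι] [DecidableEq ι]
    (w : ι → R) (i : ι) : weightedSumSquares R w (Pi.single i 1) = w i := by
  rw [weightedSumSquares_apply, Finset.sum_eq_single i (fun j _ hj => by simp [hj]) (by simp)]
  simp

lemma weightedSumSquares_nonneg {R ι : Type*} [CommRing R] [LinearOrder R]
    [IsStrictOrderedRing R] [Fintype ι] {w : ι → R} (hw : ∀ i, 0 ≤ w i) (v : ι → R) :
    0 ≤ weightedSumSquares R w v := by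
  rw [weightedSumSquares_apply]
  exact Finset.sum_nonneg fun i _ => mul_nonneg (hw i) (mul_self_nonneg (v i))

lemma not_equivalent_weightedSumSquares_of_nonneg_of_neg {R ι ι' : Type*} [CommRing R]
    [LinearOrder R] [IsStrictOrderedRing R] [Fintype ι] [Fintype ι'] {w : ι → R} {w' : ι' → R}
    (hw : ∀ i, 0 ≤ w i) (j : ι') (hj : w' j < 0) :
    ¬ Equivalent (weightedSumSquares R w) (weightedSumSquares R w') := by
  classical
  rintro ⟨e⟩
  have h_rep : weightedSumSquares R w (e.symm (Pi.single j 1)) = w' j := by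
    rw [e.symm.map_app, weightedSumSquares_single]
  exact (weightedSumSquares_nonneg hw _).not_gt (h_rep ▸ hj)

end QuadraticMap

theorem pfister_forms_not_equivalent_general
    (p : ℕ) (hp : p.Prime)
    (K : IntermediateField ℚ ℝ)
    (a : K) (ha : (a : ℝ) = Real.sqrt p) :
    ¬ QuadraticMap.Equivalent
        (QuadraticMap.weightedSumSquares K
          (fun i : Fin 8 => if (i : ℕ) < 4 then (1 : K) else a))
        (QuadraticMap.weightedSumSquares K
          (fun i : Fin 8 => if (i : ℕ) < 4 then (1 : K) else -a)) := by
  have ha_pos : 0 < a := by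
    have : (0 : ℝ) < a := ha ▸ Real.sqrt_pos.mpr (by exact_mod_cast hp.pos)
    exact_mod_cast this
  refine QuadraticMap.not_equivalent_weightedSumSquares_of_nonneg_of_neg
    (fun i => ?_) (4 : Fin 8) (by simpa using ha_pos)
  split_ifs
  exacts [zero_le_one, ha_pos.le]

/-- Let `p` be a prime, `K = ℚ(√p) ⊆ ℝ` the real quadratic field generated by the
positive square root `a = √p`.  Then the diagonal quadratic forms
`x₁²+x₂²+x₃²+x₄² + a(x₅²+x₆²+x₇²+x₈²)` and `x₁²+x₂²+x₃²+x₄² - a(x₅²+x₆²+x₇²+x₈²)`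
over `K` are not equivalent. -/
theorem pfister_forms_not_equivalent
    (p : ℕ) (hp : p.Prime)
    (K : IntermediateField ℚ ℝ) (hK : K = ℚ⟮Real.sqrt (p : ℝ)⟯)
    (a : K) (ha : (a : ℝ) = Real.sqrt p) :
    ¬ QuadraticMap.Equivalent
        (QuadraticMap.weightedSumSquares K
          (fun i : Fin 8 => if (i : ℕ) < 4 then (1 : K) else a))
        (QuadraticMap.weightedSumSquares K
          (fun i : Fin 8 => if (i : ℕ) < 4 then (1 : K) else -a)) :=
  pfister_forms_not_equivalent_general p hp K a ha
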